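/- arXiv:1101.4469 — 2 statements merged into one kernel-verified Lean document; each statement's English description precedes it below -/
import Mathlib

section
/- Kummer's summation: ₂F₁(-m, 2α+2; 2α+m+3; -1) = (2α+3)_m/(α+2)_m, where m is a nonnegative integer, i.e., Σ_{j=0}^{m} ((-m)_j(2α+2)_j)/(j!(2α+m+3)_j)·(-1)^j = (2α+3)_m/(α+2)_m. -/
/-!
Put `b = 2α + 2`, let `t_m(j)` be the `j`-th term of `₂F₁(-m, b; b+m+1; -1)` and
`S_m = ∑ⱼ t_m(j)`.
Both sides of the identity satisfy the first-order recurrence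
`(b/2 + m + 1) S_{m+1} = (b + m + 1) S_m` with `S_0 = 1`. For the sums this is Zeilberger's
method: with the certificate `G(j) = -j (b+m+1+j) t_{m+1}(j)` the difference of the two sides
of the recurrence is, termwise, `G(j+1) - G(j)` (up to the factor `2(m+1)`), and `G` vanishes
at both ends of the range of summation.
-/

open Finset

/-- Pochhammer symbol `(a)_k = a(a+1)⋯(a+k-1)`. -/
noncomputable def poch (a : ℝ) (k : ℕ) : ℝ := ∏ i ∈ Finset.range k, (a + i)

open scoped Nat

lemma poch_succ_right (a : ℝ) (k : ℕ) : poch a (k + 1) = poch a k * (a + k) :=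
  prod_range_succ _ _

lemma poch_succ_left (a : ℝ) (k : ℕ) : poch a (k + 1) = a * poch (a + 1) k := by
  rw [poch, prod_range_succ', poch, mul_comm]
  push_cast
  simp only [add_zero, add_assoc, add_comm (1 : ℝ)]

lemma poch_pos {a : ℝ} (ha : 0 < a) (k : ℕ) : 0 < poch a k :=
  prod_pos fun _ _ => by positivity

lemma poch_neg_natCast_eq_zero {m k : ℕ} (h : m < k) : poch (-(m : ℝ)) k = 0 :=
  prod_eq_zero (mem_range.mpr h) (neg_add_cancel _)

section Kummer

variable (b : ℝ)

noncomputable def kummerTerm (m j : ℕ) : ℝ :=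
  poch (-(m : ℝ)) j * poch b j / ((j ! : ℝ) * poch (b + m + 1) j) * (-1) ^ j

noncomputable def kummerSum (m : ℕ) : ℝ :=
  ∑ j ∈ range (m + 1), kummerTerm b m j

noncomputable def kummerCert (m j : ℕ) : ℝ :=
  -((j : ℝ) * (b + m + 1 + j)) * kummerTerm b (m + 1) j

lemma kummerTerm_eq_zero {m j : ℕ} (h : m < j) : kummerTerm b m j = 0 := by
  simp [kummerTerm, poch_neg_natCast_eq_zero h]

lemma kummerTerm_succ_right (n j : ℕ) :
    kummerTerm b n (j + 1) =
      -(kummerTerm b n j * (((j : ℝ) - n) * (b + j) / ((j + 1) * (b + n + 1 + j)))) := by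
  simp only [kummerTerm, poch_succ_right, Nat.factorial_succ, pow_succ]
  push_cast
  field_simp
  ring

variable {b} (hb : -1 < b)
include hb

lemma kummerTerm_succ_left (m j : ℕ) :
    (m + 1) * (b + m + 1) * kummerTerm b m j =
      (m + 1 - j) * (b + m + 1 + j) * kummerTerm b (m + 1) j := by
  have hnum :
      poch (-(m : ℝ)) j * (-(m : ℝ) - 1) = poch (-(m : ℝ) - 1) j * ((j : ℝ) - m - 1) := by
    have h := poch_succ_left (-(m : ℝ) - 1) j
    rw [poch_succ_right, sub_add_cancel] at h
    linear_combination -h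
  have hden : poch (b + m + 1) j * (b + m + 1 + j) = (b + m + 1) * poch (b + m + 2) j := by
    rw [← poch_succ_right, poch_succ_left]
    congr 2
    ring
  have hm : (0 : ℝ) ≤ m := m.cast_nonneg
  have hj : (0 : ℝ) ≤ j := j.cast_nonneg
  have hC : poch (b + m + 1) j ≠ 0 := (poch_pos (by linarith) j).ne'
  have hC' : poch (b + m + 2) j ≠ 0 := (poch_pos (by linarith) j).ne'
  unfold kummerTerm
  push_cast
  rw [neg_add', show b + (m + 1) + 1 = b + m + 2 by ring]
  field_simp
  linear_combination poch b j * (-(b + m + 1) * poch (b + m + 2) j * hnum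
    + ((j : ℝ) - m - 1) * poch (-(m : ℝ) - 1) j * hden)

lemma kummerCert_succ_sub (m j : ℕ) :
    (m + 1) * (b + 2 * m + 2) * kummerTerm b (m + 1) j
        - 2 * (m + 1) * (b + m + 1) * kummerTerm b m j =
      kummerCert b m (j + 1) - kummerCert b m j := by
  have hm : (0 : ℝ) ≤ m := m.cast_nonneg
  have hj : (0 : ℝ) ≤ j := j.cast_nonneg
  have h₁ : (j : ℝ) + 1 ≠ 0 := by positivity
  have h₂ : b + (m + 1) + 1 + j ≠ 0 := by linarith
  rw [mul_assoc 2, mul_assoc 2, kummerTerm_succ_left hb, kummerCert, kummerCert,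
    kummerTerm_succ_right]
  push_cast
  field_simp
  ring

lemma kummerSum_succ (m : ℕ) :
    (b + 2 * m + 2) * kummerSum b (m + 1) = 2 * (b + m + 1) * kummerSum b m := by
  have htele : ∑ j ∈ range (m + 1 + 1),
      ((m + 1) * (b + 2 * m + 2) * kummerTerm b (m + 1) j
        - 2 * (m + 1) * (b + m + 1) * kummerTerm b m j) = 0 := by
    rw [sum_congr rfl fun j _ => kummerCert_succ_sub hb m j, sum_range_sub, kummerCert,
      kummerTerm_eq_zero b (lt_add_one (m + 1)), kummerCert]
    simp
  rw [sum_sub_distrib, ← mul_sum, ← mul_sum, sum_range_succ (kummerTerm b m),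
    kummerTerm_eq_zero b (lt_add_one m), add_zero] at htele
  have hm : (m : ℝ) + 1 ≠ 0 := by positivity
  apply mul_left_cancel₀ hm
  unfold kummerSum
  linear_combination htele

theorem kummerSum_eq (m : ℕ) : kummerSum b m = poch (b + 1) m / poch (b / 2 + 1) m := by
  induction m with
  | zero => simp [kummerSum, kummerTerm, poch]
  | succ m ih =>
    have hm : (0 : ℝ) ≤ m := m.cast_nonneg
    have hQ : poch (b / 2 + 1) m ≠ 0 := (poch_pos (by linarith) m).ne'
    have h₁ : b / 2 + 1 + m ≠ 0 := by linarith
    have hrec := kummerSum_succ hb m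
    rw [ih, ← mul_div_assoc, eq_div_iff hQ] at hrec
    rw [poch_succ_right, poch_succ_right, eq_div_iff (mul_ne_zero hQ h₁)]
    linear_combination hrec / 2

end Kummer

/-- Kummer's summation for the terminating ₂F₁ at argument -1:
`₂F₁(-m, 2α+2; 2α+m+3; -1) = (2α+3)_m / (α+2)_m`. -/
theorem kummer_summation (m : ℕ) (α : ℝ) (hα : α > -1) :
    ∑ j ∈ Finset.range (m + 1),
        poch (-(m : ℝ)) j * poch (2 * α + 2) j
          / ((j.factorial : ℝ) * poch (2 * α + m + 3) j) * (-1 : ℝ) ^ j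
      = poch (2 * α + 3) m / poch (α + 2) m := by
  have h := kummerSum_eq (b := 2 * α + 2) (by linarith) m
  rw [show (2 * α + 2) / 2 + 1 = α + 2 by ring, show 2 * α + 2 + 1 = 2 * α + 3 by ring] at h
  simpa only [kummerSum, kummerTerm, show 2 * α + 2 + m + 1 = 2 * α + m + 3 by ring] using h
end

section
/- Reduction of Hahn to Krawtchouk polynomials: ₃F₂(-s, s+1, -i; 1/2, -m; 1) = (-1)^i · (C(2m+1,2i)/C(m,i)) · ₂F₁(-2i, -m-s-1; -2m-1; 2) for integers 0 ≤ i, s ≤ m. -/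
open Finset

/-!
After clearing the Pochhammer symbols and multiplying by `C(m,i)`, the Hahn sum becomes
`∑ₖ (-4)^k C(s+k,2k) C(m-k,i-k)` and the Krawtchouk sum becomes
`(-1)^i ∑ₖ (-2)^k C(m+s+1,k) C(2m+1-k,2i-k)`. The latter sum is the coefficient of `X^(2i)` in
`(1-X)^(m+s+1) (1+X)^(m-s) = (1-X²)^(m-s) (1-X)^(2s+1)`; expand `1 - X = (1 + X) - 2X`.
Since `(1-X²)^(m-s)` is even, its even coefficients only see the even part of `(1-X)^(2s+1)`.
By `a^(2s+1) + b^(2s+1) = (a+b) ∑ₖ C(s+k,2k) (ab)^(s-k) ((a-b)²)^k` at `a, b = 1 ∓ X`,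
this even part is `∑ₖ C(s+k,2k) (4X²)^k (1-X²)^(s-k)`, and the coefficient of `X^(2i)` in its
product with `(1-X²)^(m-s)` is, up to the sign `(-1)^i`, the Hahn sum.
-/

open scoped Nat

lemma poch_eq_eval_ascPochhammer (a : ℝ) (k : ℕ) : poch a k = (ascPochhammer ℝ k).eval a := by
  induction k with
  | zero => simp [poch]
  | succ k ih => rw [poch, prod_range_succ, ← poch, ih, ascPochhammer_succ_eval]

lemma poch_neg_natCast (n k : ℕ) : poch (-n) k = (-1) ^ k * k ! * n.choose k := by
  rw [poch_eq_eval_ascPochhammer, ascPochhammer_eval_neg_eq_descPochhammer,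
    descPochhammer_eval_eq_descFactorial, Nat.descFactorial_eq_factorial_mul_choose]
  push_cast
  ring

lemma poch_neg_natCast_mul_poch_natCast_add_one (n k : ℕ) :
    poch (-n) k * poch (n + 1) k = (-1) ^ k * (2 * k) ! * (n + k).choose (2 * k) := by
  have hdesc :
      n.descFactorial k * (n + k).descFactorial k = (2 * k) ! * (n + k).choose (2 * k) := by
    rw [← Nat.descFactorial_eq_factorial_mul_choose, ← Nat.descFactorial_mul_descFactorial
      (by omega : k ≤ 2 * k), show n + k - k = n by omega, show 2 * k - k = k by omega]
  rw [poch_eq_eval_ascPochhammer, poch_eq_eval_ascPochhammer,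
    ascPochhammer_eval_neg_eq_descPochhammer, descPochhammer_eval_eq_descFactorial,
    ← Nat.cast_add_one, ascPochhammer_nat_eq_natCast_descFactorial,
    show n + 1 + k - 1 = n + k by omega, mul_assoc, ← Nat.cast_mul, hdesc]
  push_cast
  ring

lemma four_pow_mul_factorial_mul_poch_half (k : ℕ) :
    4 ^ k * k ! * poch (1 / 2) k = (2 * k) ! := by
  induction k with
  | zero => simp [poch]
  | succ k ih =>
    rw [poch, prod_range_succ, ← poch, show 2 * (k + 1) = 2 * k + 1 + 1 by ring,
      Nat.factorial_succ, Nat.factorial_succ, Nat.factorial_succ, Nat.cast_mul, Nat.cast_mul,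
      Nat.cast_mul, ← ih]
    push_cast
    ring

section MorganVoyce

variable {R : Type*} [CommRing R]

/-- The Morgan–Voyce polynomial `b_n(x) = ∑ₖ C(n+k,2k) x^k`, homogenised to degree `n`. -/
def morganVoyce (p q : R) (n : ℕ) : R :=
  ∑ k ∈ range (n + 1), ((n + k).choose (2 * k) : R) * p ^ (n - k) * q ^ k

lemma map_morganVoyce {S F : Type*} [CommRing S] [FunLike F R S] [RingHomClass F R S] (f : F)
    (p q : R) (n : ℕ) : f (morganVoyce p q n) = morganVoyce (f p) (f q) n := by
  simp [morganVoyce, map_sum]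

lemma pow_mul_morganVoyce (p q : R) (n t : ℕ) :
    p ^ t * morganVoyce p q n
      = ∑ k ∈ range (n + t + 1), ((n + k).choose (2 * k) : R) * p ^ (n + t - k) * q ^ k := by
  rw [morganVoyce, mul_sum]
  calc _ = ∑ k ∈ range (n + 1), ((n + k).choose (2 * k) : R) * p ^ (n + t - k) * q ^ k := by
        refine sum_congr rfl fun k hk => ?_
        rw [mem_range] at hk
        rw [show n + t - k = (n - k) + t by omega, pow_add]
        ring
    _ = _ := by
        refine sum_subset (range_subset_range.2 (by omega)) fun k _ hk => ?_
        rw [mem_range] at hk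
        rw [Nat.choose_eq_zero_of_lt (by omega), Nat.cast_zero, zero_mul, zero_mul]

lemma choose_add_two_add_choose (n r : ℕ) :
    (n + 2).choose (r + 2) + n.choose (r + 2) = n.choose r + 2 * (n + 1).choose (r + 2) := by
  have h1 : (n + 2).choose (r + 2) = (n + 1).choose (r + 1) + (n + 1).choose (r + 2) :=
    Nat.choose_succ_succ (n + 1) (r + 1)
  have h2 : (n + 1).choose (r + 1) = n.choose r + n.choose (r + 1) := Nat.choose_succ_succ n r
  have h3 : (n + 1).choose (r + 2) = n.choose (r + 1) + n.choose (r + 2) :=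
    Nat.choose_succ_succ n (r + 1)
  omega

lemma morganVoyce_add_two (p q : R) (n : ℕ) :
    morganVoyce p q (n + 2)
      = (q + 2 * p) * morganVoyce p q (n + 1) - p ^ 2 * morganVoyce p q n := by
  have h0 := pow_mul_morganVoyce p q (n + 2) 0
  have h1 := pow_mul_morganVoyce p q (n + 1) 1
  have h2 := pow_mul_morganVoyce p q n 2
  rw [pow_zero, one_mul] at h0
  rw [pow_one] at h1
  have hq : q * morganVoyce p q (n + 1)
      = ∑ k ∈ range (n + 2),
          ((n + 1 + k).choose (2 * k) : R) * p ^ (n + 1 - k) * q ^ (k + 1) := by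
    rw [morganVoyce, mul_sum]
    exact sum_congr rfl fun k _ => by ring
  have hsum : morganVoyce p q (n + 2) + p ^ 2 * morganVoyce p q n
      - 2 * (p * morganVoyce p q (n + 1)) = q * morganVoyce p q (n + 1) := by
    rw [h0, h1, h2, hq, mul_sum, ← sum_add_distrib, ← sum_sub_distrib, sum_range_succ']
    simp only [add_zero]
    refine (congrArg₂ (· + ·) (sum_congr rfl fun k _ => ?_) ?_).trans (add_zero _)
    · have hpascal : ((n + 1 + k + 2).choose (2 * k + 2) : R) + (n + 1 + k).choose (2 * k + 2)
          = (n + 1 + k).choose (2 * k) + 2 * (n + 1 + k + 1).choose (2 * k + 2) := by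
        simpa using congrArg (Nat.cast : ℕ → R) (choose_add_two_add_choose (n + 1 + k) (2 * k))
      rw [show n + 2 + (k + 1) = n + 1 + k + 2 by omega, show n + (k + 1) = n + 1 + k by omega,
        show n + 1 + (k + 1) = n + 1 + k + 1 by omega, show 2 * (k + 1) = 2 * k + 2 by omega,
        show n + 2 - (k + 1) = n + 1 - k by omega]
      linear_combination p ^ (n + 1 - k) * q ^ (k + 1) * hpascal
    · simp only [mul_zero, Nat.choose_zero_right, Nat.cast_one, pow_zero]
      ring
  linear_combination hsum

theorem pow_add_pow_eq_mul_morganVoyce (a b : R) (n : ℕ) :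
    a ^ (2 * n + 1) + b ^ (2 * n + 1) = (a + b) * morganVoyce (a * b) ((a - b) ^ 2) n := by
  induction n using Nat.twoStepInduction with
  | zero => simp [morganVoyce]
  | one => simp [morganVoyce, sum_range_succ]; ring
  | more n ih0 ih1 =>
    rw [morganVoyce_add_two]
    linear_combination ((a - b) ^ 2 + 2 * (a * b)) * ih1 - (a * b) ^ 2 * ih0


end MorganVoyce

section Coefficients

open Polynomial

variable {R : Type*} [CommRing R]

lemma sum_range_mul_ite_le {M : Type*} [NonUnitalNonAssocSemiring M] {f g : ℕ → M} {N n : ℕ}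
    (hf : ∀ k, N < k → f k = 0) :
    ∑ k ∈ range (N + 1), f k * (if k ≤ n then g k else 0)
      = ∑ k ∈ range (n + 1), f k * g k := by
  calc _ = ∑ k ∈ range (N + n + 1), f k * (if k ≤ n then g k else 0) :=
        sum_subset (range_subset_range.2 (by omega)) fun k _ hk => by
          rw [hf k (by simp at hk; omega), zero_mul]
    _ = ∑ k ∈ range (n + 1), f k * (if k ≤ n then g k else 0) :=
        (sum_subset (range_subset_range.2 (by omega)) fun k _ hk => by
          rw [if_neg (by simp at hk; omega), mul_zero]).symm
    _ = _ := sum_congr rfl fun k hk => by rw [if_pos (Nat.lt_succ_iff.1 (mem_range.1 hk))]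

lemma coeff_comp_neg_X (p : R[X]) (n : ℕ) : (p.comp (-X)).coeff n = (-1) ^ n * p.coeff n := by
  induction p using Polynomial.induction_on' with
  | add p q hp hq => rw [add_comp, coeff_add, coeff_add, hp, hq, mul_add]
  | monomial k a =>
    rw [monomial_comp, neg_pow, show (-1 : R[X]) ^ k = C ((-1) ^ k) by simp, ← mul_assoc,
      ← C_mul, coeff_C_mul_X_pow, coeff_monomial]
    split_ifs <;> simp_all [mul_comm]

lemma coeff_one_sub_X_pow (n d : ℕ) : ((1 - X : R[X]) ^ n).coeff d = (-1) ^ d * n.choose d := by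
  have h : (1 - X : R[X]) ^ n = ((1 + X) ^ n).comp (-X) := by simp [sub_eq_add_neg]
  rw [h, coeff_comp_neg_X, coeff_one_add_X_pow]

lemma coeff_one_sub_X_pow_mul_one_add_X_pow (N M n : ℕ) :
    ((1 - X : R[X]) ^ N * (1 + X) ^ M).coeff n
      = ∑ k ∈ range (n + 1), (-2 : R) ^ k * N.choose k * (N + M - k).choose (n - k) := by
  rw [show (1 - X : R[X]) = -2 * X + (1 + X) by ring, add_pow, sum_mul, finsetSum_coeff]
  calc _ = ∑ k ∈ range (N + 1), ((-2 : R) ^ k * N.choose k) *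
        (if k ≤ n then ((N + M - k).choose (n - k) : R) else 0) := by
        refine sum_congr rfl fun k hk => ?_
        rw [mem_range] at hk
        rw [show (-2 * X : R[X]) ^ k * (1 + X) ^ (N - k) * (N.choose k : R[X]) * (1 + X) ^ M
            = C ((-2 : R) ^ k * N.choose k) * (X ^ k * (1 + X) ^ (N + M - k)) by
              rw [show N + M - k = (N - k) + M by omega, pow_add]
              simp only [map_mul, map_pow, map_neg, map_natCast, map_ofNat]
              ring,
          coeff_C_mul, coeff_X_pow_mul', coeff_one_add_X_pow]
    _ = _ := sum_range_mul_ite_le fun k hk => by rw [Nat.choose_eq_zero_of_lt hk]; simp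

lemma coeff_mul_comp_neg_X_of_even {A : R[X]} (hA : A.comp (-X) = A) (B : R[X]) {n : ℕ}
    (hn : Even n) : (A * B.comp (-X)).coeff n = (A * B).coeff n := by
  conv_lhs => rw [← hA, ← mul_comp_neg_X, coeff_comp_neg_X, hn.neg_one_pow, one_mul]

lemma coeff_one_sub_X_sq_pow_mul_morganVoyce {m s : ℕ} (hs : s ≤ m) (i : ℕ) :
    ((1 - X ^ 2 : R[X]) ^ (m - s) * morganVoyce (1 - X ^ 2) (4 * X ^ 2) s).coeff (2 * i)
      = ∑ k ∈ range (i + 1),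
          (4 : R) ^ k * (s + k).choose (2 * k) * (-1) ^ (i - k) * (m - k).choose (i - k) := by
  have hexpand : (1 - X ^ 2 : R[X]) ^ (m - s) * morganVoyce (1 - X ^ 2) (4 * X ^ 2) s
      = expand R 2 ((1 - X) ^ (m - s) * morganVoyce (1 - X) (4 * X) s) := by
    rw [map_mul, map_morganVoyce]
    simp [map_ofNat]
  rw [hexpand, coeff_expand_mul' two_pos, morganVoyce, mul_sum, finsetSum_coeff]
  calc _ = ∑ k ∈ range (s + 1), ((4 : R) ^ k * (s + k).choose (2 * k)) *
        (if k ≤ i then (-1) ^ (i - k) * ((m - k).choose (i - k) : R) else 0) := by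
        refine sum_congr rfl fun k hk => ?_
        rw [mem_range] at hk
        rw [show (1 - X : R[X]) ^ (m - s) *
              (((s + k).choose (2 * k) : R[X]) * (1 - X) ^ (s - k) * (4 * X) ^ k)
            = C ((4 : R) ^ k * (s + k).choose (2 * k)) * (X ^ k * (1 - X) ^ (m - k)) by
              rw [show m - k = (m - s) + (s - k) by omega, pow_add]
              simp only [map_mul, map_pow, map_natCast, map_ofNat]
              ring,
          coeff_C_mul, coeff_X_pow_mul', coeff_one_sub_X_pow]
    _ = _ := by
        rw [sum_range_mul_ite_le fun k hk => by rw [Nat.choose_eq_zero_of_lt (by omega)]; simp]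
        exact sum_congr rfl fun k _ => by ring

end Coefficients

open Polynomial in
theorem sum_neg_four_pow_mul_choose_mul_choose {m s : ℕ} (hs : s ≤ m) (i : ℕ) :
    ∑ k ∈ range (i + 1), (-4 : ℤ) ^ k * (s + k).choose (2 * k) * (m - k).choose (i - k)
      = (-1) ^ i * ∑ k ∈ range (2 * i + 1),
          (-2 : ℤ) ^ k * (m + s + 1).choose k * (2 * m + 1 - k).choose (2 * i - k) := by
  let A : ℤ[X] := (1 - X ^ 2) ^ (m - s)
  let B : ℤ[X] := (1 - X) ^ (2 * s + 1)
  let E : ℤ[X] := morganVoyce (1 - X ^ 2) (4 * X ^ 2) s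
  have hA : A.comp (-X) = A := by simp [A]
  have hB : B + B.comp (-X) = 2 * E := by
    have h := pow_add_pow_eq_mul_morganVoyce (1 - X : ℤ[X]) (1 + X) s
    rw [show (1 - X : ℤ[X]) + (1 + X) = 2 by ring,
      show (1 - X : ℤ[X]) * (1 + X) = 1 - X ^ 2 by ring,
      show ((1 - X : ℤ[X]) - (1 + X)) ^ 2 = 4 * X ^ 2 by ring] at h
    rw [← h]
    simp [B, sub_eq_add_neg]
  have hAB : A * B = (1 - X) ^ (m + s + 1) * (1 + X) ^ (m - s) := by
    rw [show m + s + 1 = (m - s) + (2 * s + 1) by omega, pow_add]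
    simp only [A, B, show (1 - X ^ 2 : ℤ[X]) = (1 - X) * (1 + X) by ring, mul_pow]
    ring
  have hAE : (A * E).coeff (2 * i) = (A * B).coeff (2 * i) := by
    refine mul_left_cancel₀ (two_ne_zero (α := ℤ)) ?_
    calc 2 * (A * E).coeff (2 * i) = (A * (B + B.comp (-X))).coeff (2 * i) := by
          rw [hB, mul_left_comm, coeff_ofNat_mul]
      _ = 2 * (A * B).coeff (2 * i) := by
          rw [mul_add, coeff_add, coeff_mul_comp_neg_X_of_even hA B (even_two_mul i)]
          ring
  have hsign :
      ∑ k ∈ range (i + 1), (-4 : ℤ) ^ k * (s + k).choose (2 * k) * (m - k).choose (i - k)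
      = (-1) ^ i * ∑ k ∈ range (i + 1),
          (4 : ℤ) ^ k * (s + k).choose (2 * k) * (-1) ^ (i - k) * (m - k).choose (i - k) := by
    rw [mul_sum]
    refine sum_congr rfl fun k hk => ?_
    obtain ⟨j, rfl⟩ := Nat.exists_eq_add_of_le (Nat.lt_succ_iff.1 (mem_range.1 hk))
    have hj : ((-1 : ℤ) ^ j) ^ 2 = 1 := by
      rw [← pow_mul, mul_comm, pow_mul, neg_one_sq, one_pow]
    rw [Nat.add_sub_cancel_left, pow_add, neg_pow (4 : ℤ)]
    linear_combination
      (-((-1) ^ k * 4 ^ k * ((s + k).choose (2 * k) : ℤ) * (m - k).choose j)) * hj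
  rw [hsign, ← coeff_one_sub_X_sq_pow_mul_morganVoyce hs, hAE, hAB,
    coeff_one_sub_X_pow_mul_one_add_X_pow, show m + s + 1 + (m - s) = 2 * m + 1 by omega]

lemma hahn_summand_eq {m i k : ℕ} (s : ℕ) (hk : k ≤ i) (hi : i ≤ m) :
    poch (-(s : ℝ)) k * poch ((s : ℝ) + 1) k * poch (-(i : ℝ)) k /
        ((k.factorial : ℝ) * poch (1 / 2) k * poch (-(m : ℝ)) k)
      = (-4) ^ k * (s + k).choose (2 * k) * (m - k).choose (i - k) / m.choose i := by
  have hchoose : (m.choose i : ℝ) * i.choose k = m.choose k * (m - k).choose (i - k) := by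
    exact_mod_cast Nat.choose_mul (n := m) hk
  have hhalf := four_pow_mul_factorial_mul_poch_half k
  have hpoch : poch (1 / 2) k ≠ 0 := by
    rintro h
    rw [h, mul_zero] at hhalf
    exact (Nat.cast_ne_zero.2 (Nat.factorial_ne_zero _)) hhalf.symm
  have hmk : (m.choose k : ℝ) ≠ 0 := Nat.cast_ne_zero.2 (Nat.choose_pos (hk.trans hi)).ne'
  have hmi : (m.choose i : ℝ) ≠ 0 := Nat.cast_ne_zero.2 (Nat.choose_pos hi).ne'
  rw [poch_neg_natCast_mul_poch_natCast_add_one, poch_neg_natCast, poch_neg_natCast,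
    div_eq_div_iff (by positivity) hmi, neg_pow (4 : ℝ), ← hhalf]
  linear_combination ((-1) ^ k) ^ 2 * 4 ^ k * (k ! : ℝ) ^ 2 * poch (1 / 2) k *
    (s + k).choose (2 * k) * hchoose

lemma krawtchouk_summand_eq {m i k : ℕ} (s : ℕ) (hk : k ≤ 2 * i) (hi : i ≤ m) :
    poch (-(2 * (i : ℝ))) k * poch (-((m : ℝ) + s + 1)) k /
        (poch (-(2 * (m : ℝ)) - 1) k * (k.factorial : ℝ)) * 2 ^ k
      = (-2) ^ k * (m + s + 1).choose k * (2 * m + 1 - k).choose (2 * i - k)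
          / (2 * m + 1).choose (2 * i) := by
  have hchoose : ((2 * m + 1).choose (2 * i) : ℝ) * (2 * i).choose k
      = (2 * m + 1).choose k * (2 * m + 1 - k).choose (2 * i - k) := by
    exact_mod_cast Nat.choose_mul (n := 2 * m + 1) hk
  have hmk : ((2 * m + 1).choose k : ℝ) ≠ 0 :=
    Nat.cast_ne_zero.2 (Nat.choose_pos (by omega)).ne'
  have hmi : ((2 * m + 1).choose (2 * i) : ℝ) ≠ 0 :=
    Nat.cast_ne_zero.2 (Nat.choose_pos (by omega)).ne'
  rw [show -(2 * (i : ℝ)) = -((2 * i : ℕ) : ℝ) by push_cast; ring,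
    show -((m : ℝ) + s + 1) = -((m + s + 1 : ℕ) : ℝ) by push_cast; ring,
    show -(2 * (m : ℝ)) - 1 = -((2 * m + 1 : ℕ) : ℝ) by push_cast; ring,
    poch_neg_natCast, poch_neg_natCast, poch_neg_natCast, div_mul_eq_mul_div,
    div_eq_div_iff (by positivity) hmi, neg_pow (2 : ℝ)]
  linear_combination ((-1) ^ k) ^ 2 * 2 ^ k * (k ! : ℝ) ^ 2 * (m + s + 1).choose k * hchoose

/-- Reduction of Hahn polynomials `Q_s(i;-1/2,1/2,m)` to symmetric Krawtchouk polynomials: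
`₃F₂(-s,s+1,-i;1/2,-m;1) = (-1)^i (C(2m+1,2i)/C(m,i)) ₂F₁(-2i,-m-s-1;-2m-1;2)`. -/
theorem hahn_to_krawtchouk_even (m i s : ℕ) (hi : i ≤ m) (hs : s ≤ m) :
    ∑ k ∈ Finset.range (i + 1),
        poch (-(s : ℝ)) k * poch ((s : ℝ) + 1) k * poch (-(i : ℝ)) k /
          ((k.factorial : ℝ) * poch (1 / 2) k * poch (-(m : ℝ)) k)
      = (-1 : ℝ) ^ i * ((Nat.choose (2 * m + 1) (2 * i) : ℝ) / (Nat.choose m i : ℝ))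
          * ∑ k ∈ Finset.range (2 * i + 1),
              poch (-(2 * (i : ℝ))) k * poch (-((m : ℝ) + s + 1)) k /
                (poch (-(2 * (m : ℝ)) - 1) k * (k.factorial : ℝ)) * 2 ^ k := by
  have hidentity := congrArg (Int.cast : ℤ → ℝ) (sum_neg_four_pow_mul_choose_mul_choose hs i)
  push_cast at hidentity
  have hm : (m.choose i : ℝ) ≠ 0 := Nat.cast_ne_zero.2 (Nat.choose_pos hi).ne'
  have h2m : ((2 * m + 1).choose (2 * i) : ℝ) ≠ 0 :=
    Nat.cast_ne_zero.2 (Nat.choose_pos (by omega)).ne'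
  calc _ = (∑ k ∈ range (i + 1),
            (-4 : ℝ) ^ k * (s + k).choose (2 * k) * (m - k).choose (i - k)) / m.choose i := by
        rw [sum_div]
        exact sum_congr rfl fun k hk => hahn_summand_eq s (Nat.lt_succ_iff.1 (mem_range.1 hk)) hi
    _ = (-1 : ℝ) ^ i * ((2 * m + 1).choose (2 * i) / m.choose i) *
          ((∑ k ∈ range (2 * i + 1),
            (-2 : ℝ) ^ k * (m + s + 1).choose k * (2 * m + 1 - k).choose (2 * i - k))
            / (2 * m + 1).choose (2 * i)) := by
        rw [hidentity]
        field_simp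
    _ = _ := by
        rw [sum_div]
        exact congrArg _ (sum_congr rfl fun k hk =>
          (krawtchouk_summand_eq s (Nat.lt_succ_iff.1 (mem_range.1 hk)) hi).symm)
end
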